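/- In an order continuous Banach lattice E, statistical uo-convergence of a sequence implies statistical un-convergence: if x_n →^{st-uo} x then x_n →^{st-un} x. -/

import Mathlib

open scoped Classical

/-- `K ⊆ ℕ` has natural density `a`. -/
def NatDensity (K : Set ℕ) (a : ℝ) : Prop :=
  Filter.Tendsto (fun n => (((Finset.range n).filter (fun k => k ∈ K)).card : ℝ) / n)
    Filter.atTop (nhds a)

lemma div_cast_le {a b : ℕ} (h : a ≤ b) (n : ℕ) : (a : ℝ) / n ≤ (b : ℝ) / n := by
  rcases Nat.eq_zero_or_pos n with rfl | hn
  · simp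
  · exact div_le_div_of_nonneg_right (by exact_mod_cast h) (by positivity)

lemma natDensity_zero_of_subset {S T : Set ℕ} (h : S ⊆ T) (hT : NatDensity T 0) :
    NatDensity S 0 := by
  refine squeeze_zero (fun n => div_nonneg (Nat.cast_nonneg _) (Nat.cast_nonneg _))
    (fun n => ?_) hT
  exact div_cast_le (Finset.card_le_card (Finset.monotone_filter_right _ (fun k _ hk => h hk))) n

lemma natDensity_union_zero {A B : Set ℕ} (hA : NatDensity A 0) (hB : NatDensity B 0) :
    NatDensity (A ∪ B) 0 := by
  have hsum : Filter.Tendsto (fun n =>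
      (((Finset.range n).filter (fun k => k ∈ A)).card : ℝ) / n +
      (((Finset.range n).filter (fun k => k ∈ B)).card : ℝ) / n)
      Filter.atTop (nhds 0) := by
    simpa using hA.add hB
  refine squeeze_zero (fun n => div_nonneg (Nat.cast_nonneg _) (Nat.cast_nonneg _))
    (fun n => ?_) hsum
  rw [← add_div, ← Nat.cast_add]
  refine div_cast_le ?_ n
  refine le_trans (Finset.card_le_card (fun k hk => ?_)) (Finset.card_union_le _ _)
  simp only [Finset.mem_filter, Set.mem_union, Finset.mem_union] at hk ⊢
  tauto

lemma natDensity_compl {K : Set ℕ} (hK : NatDensity K 1) : NatDensity Kᶜ 0 := by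
  have h : Filter.Tendsto (fun n =>
      1 - (((Finset.range n).filter (fun k => k ∈ K)).card : ℝ) / n)
      Filter.atTop (nhds 0) := by
    simpa using (tendsto_const_nhds (x := (1:ℝ))).sub hK
  refine h.congr' ?_
  filter_upwards [Filter.eventually_gt_atTop 0] with n hn
  have hle : ((Finset.range n).filter (fun k => k ∈ K)).card ≤ n := by
    simpa using Finset.card_le_card (Finset.filter_subset _ (Finset.range n))
  simp only [Set.mem_compl_iff, Finset.filter_not, Finset.card_sdiff_of_subset (Finset.filter_subset _ _),
    Finset.card_range]
  rw [Nat.cast_sub hle, sub_div, div_self (by positivity : (n:ℝ) ≠ 0)]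

lemma natDensity_lt (m : ℕ) : NatDensity {n | n < m} 0 := by
  refine squeeze_zero (fun n => div_nonneg (Nat.cast_nonneg _) (Nat.cast_nonneg _))
    (fun n => ?_) (tendsto_const_div_atTop_nhds_zero_nat (m : ℝ))
  refine div_cast_le ?_ n
  refine le_trans (Finset.card_le_card (fun k hk => ?_)) (le_of_eq (Finset.card_range m))
  simp only [Finset.mem_filter, Set.mem_setOf_eq] at hk
  exact Finset.mem_range.2 hk.2

lemma natDensity_empty : NatDensity (∅ : Set ℕ) 0 := by
  refine Filter.Tendsto.congr (f₁ := fun _ => (0:ℝ)) (fun n => ?_) tendsto_const_nhds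
  simp

variable {E : Type*} [NormedAddCommGroup E] [Lattice E] [HasSolidNorm E]
  [IsOrderedAddMonoid E] [NormedSpace ℝ E]
  [PosSMulMono ℝ E] [CompleteSpace E]

/-- `p` is statistically monotone decreasing to `0`. -/
def StatDecrZero (p : ℕ → E) : Prop :=
  ∃ K : Set ℕ, NatDensity K 1 ∧ (∀ j ∈ K, ∀ k ∈ K, j ≤ k → p k ≤ p j) ∧ IsGLB (p '' K) 0

/-- `x` statistically order converges to `l`. -/
def StatOrderConv (x : ℕ → E) (l : E) : Prop :=
  ∃ p : ℕ → E, StatDecrZero p ∧ NatDensity {n | ¬ |x n - l| ≤ p n} 0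

/-- `x` statistically unbounded order converges to `l`. -/
def StatUOConv (x : ℕ → E) (l : E) : Prop :=
  ∀ u : E, 0 ≤ u → StatOrderConv (fun n => |x n - l| ⊓ u) 0

/-- `x` is statistically unbounded norm convergent to `l`. -/
def StUNConv (x : ℕ → E) (l : E) : Prop :=
  ∀ ε : ℝ, 0 < ε → ∀ u : E, 0 ≤ u → NatDensity {n | ε ≤ ‖|x n - l| ⊓ u‖} 0

/-- In an order continuous Banach lattice, statistical uo-convergence implies
statistical un-convergence. -/
theorem orderContinuous_stuo_imp_stun
    (hoc : ∀ (ι : Type) [SemilatticeSup ι] [Nonempty ι] (p : ι → E), Antitone p →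
      IsGLB (Set.range p) 0 → Filter.Tendsto (fun i => ‖p i‖) Filter.atTop (nhds 0))
    (x : ℕ → E) (l : E) (hx : StatUOConv x l) : StUNConv x l := by
  intro ε hε u hu
  obtain ⟨p, ⟨K, hK1, hmono, hglb⟩, hbad⟩ := hx u hu
  have hKne : K.Nonempty := by
    rw [Set.nonempty_iff_ne_empty]
    rintro rfl
    have := tendsto_nhds_unique hK1 natDensity_empty
    norm_num at this
  haveI : Nonempty K := hKne.to_subtype
  have hanti : Antitone (fun j : K => p j) := fun a b hab => hmono a a.2 b b.2 hab
  have hglb' : IsGLB (Set.range fun j : K => p j) 0 := by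
    rwa [← Set.image_eq_range] at *
  have htend := hoc K (fun j : K => p j) hanti hglb'
  obtain ⟨m, hm⟩ := Filter.eventually_atTop.1 (htend.eventually (gt_mem_nhds hε))
  have hsub : {n | ε ≤ ‖|x n - l| ⊓ u‖} ⊆
      {n | ¬ |(|x n - l| ⊓ u) - 0| ≤ p n} ∪ (Kᶜ ∪ {n | n < (m : ℕ)}) := by
    intro n hn
    by_contra h
    simp only [Set.mem_union, Set.mem_setOf_eq, Set.mem_compl_iff, not_or, not_not,
      not_lt] at h
    obtain ⟨hle, hnK, hmn⟩ := h
    have hnonneg : (0 : E) ≤ |x n - l| ⊓ u := le_inf (abs_nonneg _) hu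
    rw [sub_zero, abs_of_nonneg hnonneg] at hle
    have h1 : ‖|x n - l| ⊓ u‖ ≤ ‖p n‖ :=
      norm_le_norm_of_abs_le_abs (by
        rw [abs_of_nonneg hnonneg]
        exact hle.trans (le_abs_self _))
    have h2 : ‖p n‖ < ε := hm ⟨n, hnK⟩ (Subtype.mk_le_mk.2 hmn)
    exact absurd hn (by simp only [Set.mem_setOf_eq, not_le]; exact lt_of_le_of_lt h1 h2)
  exact natDensity_zero_of_subset hsub
    (natDensity_union_zero hbad (natDensity_union_zero (natDensity_compl hK1)
      (natDensity_lt m)))
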